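/- Let m ≥ 3. The graph on Z_m × Z_8 formed by the union of Cay(Z_m × Z_8, {±1} × {4}) and, for each j ∈ Z_m, copies on {j} × Z_8 of the 1-factors I_4 = {(0,5),(1,7),(2,4),(3,6)}, I_5 = {(0,2),(1,3),(5,7),(4,6)}, I_6 = {(0,6),(1,4),(2,7),(3,5)}, can be decomposed into two C_8-factors and one perfect matching. -/
import Mathlib


open SimpleGraph

/-- `H` is a `C_k`-factor: a 2-regular spanning graph all of whose
connected components have exactly `k` vertices (hence are `k`-cycles). -/
def IsCycleFactor {V : Type*} (H : SimpleGraph V) (k : ℕ) : Prop :=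
  (∀ v, (H.neighborSet v).ncard = 2) ∧
  (∀ v, (H.connectedComponentMk v).supp.ncard = k)

/-- `H` is a perfect matching (1-factor): every vertex has exactly one neighbour. -/
def IsOneFactor {V : Type*} (H : SimpleGraph V) : Prop :=
  ∀ v, (H.neighborSet v).ncard = 1

/-- A partition of the edge set of `G` into cycle factors with prescribed cycle lengths. -/
def CycleDecomp {V : Type*} {k : ℕ} (G : SimpleGraph V) (ℓ : Fin k → ℕ) : Prop :=
  ∃ f : Fin k → SimpleGraph V,
    (∀ i, f i ≤ G ∧ IsCycleFactor (f i) (ℓ i)) ∧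
    ∀ e ∈ G.edgeSet, ∃! i, e ∈ (f i).edgeSet

/-- A partition of the edge set of `G` into cycle factors with prescribed cycle
lengths together with one perfect matching. -/
def CycleDecompPM {V : Type*} {k : ℕ} (G : SimpleGraph V) (ℓ : Fin k → ℕ) : Prop :=
  ∃ (f : Fin k → SimpleGraph V) (M : SimpleGraph V),
    (∀ i, f i ≤ G ∧ IsCycleFactor (f i) (ℓ i)) ∧ M ≤ G ∧ IsOneFactor M ∧
    ∀ e ∈ G.edgeSet,
      ((∃! i, e ∈ (f i).edgeSet) ∧ e ∉ M.edgeSet) ∨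
      ((∀ i, e ∉ (f i).edgeSet) ∧ e ∈ M.edgeSet)

/-- The Cayley graph on `ZMod m × ZMod n` with connection set `S`
(symmetrised, loops removed). -/
def cay (m n : ℕ) (S : Set (ZMod m × ZMod n)) : SimpleGraph (ZMod m × ZMod n) :=
  SimpleGraph.fromRel (fun x y => x - y ∈ S)

/-- The 1-factors `I_4`, `I_5` and `I_6` of `K_8`, as a set of pairs. -/
def I456 : Set (ZMod 8 × ZMod 8) :=
  {(0, 5), (1, 7), (2, 4), (3, 6),
   (0, 2), (1, 3), (5, 7), (4, 6),
   (0, 6), (1, 4), (2, 7), (3, 5)}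

/- ############ auxiliary development ############ -/

def A8 : ZMod 8 × ZMod 8 → Prop := fun p =>
  p = (0,5) ∨ p = (1,7) ∨ p = (2,4) ∨ p = (3,6) ∨ p = (0,2) ∨ p = (1,3) ∨ p = (5,7) ∨ p = (4,6)
def B8 : ZMod 8 × ZMod 8 → Prop := fun p => p = (0,6) ∨ p = (1,4) ∨ p = (2,7) ∨ p = (3,5)
def X8 : ZMod 8 → Prop := fun b => b = 0 ∨ b = 3 ∨ b = 5 ∨ b = 6
instance : DecidablePred A8 := fun p => by unfold A8; infer_instance
instance : DecidablePred B8 := fun p => by unfold B8; infer_instance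
instance : DecidablePred X8 := fun p => by unfold X8; infer_instance
instance I456.dec : ∀ p : ZMod 8 × ZMod 8, Decidable (p ∈ I456) := fun p =>
  decidable_of_iff (A8 p ∨ B8 p) (by simp [I456, A8, B8]; tauto)

lemma A8_irr : ∀ b : ZMod 8, ¬ A8 (b,b) := by decide
lemma B8_irr : ∀ b : ZMod 8, ¬ B8 (b,b) := by decide

def gf0 (m : ℕ) : SimpleGraph (ZMod m × ZMod 8) :=
  SimpleGraph.fromRel (fun x y => x.1 = y.1 ∧ A8 (x.2, y.2))
def gf1 (m : ℕ) : SimpleGraph (ZMod m × ZMod 8) :=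
  SimpleGraph.fromRel (fun x y =>
    (x.1 = y.1 ∧ B8 (x.2, y.2)) ∨ (y.1 = x.1 + 1 ∧ X8 x.2 ∧ y.2 = x.2 + 4))
def gM (m : ℕ) : SimpleGraph (ZMod m × ZMod 8) :=
  SimpleGraph.fromRel (fun x y => y.1 = x.1 + 1 ∧ ¬ X8 x.2 ∧ y.2 = x.2 + 4)

lemma zm_one_ne {m : ℕ} (hm : 3 ≤ m) : (1 : ZMod m) ≠ 0 := by
  intro h
  have h2 : (m:ℕ) ∣ 1 :=
    (ZMod.natCast_eq_zero_iff 1 m).mp (by exact_mod_cast h)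
  have := Nat.le_of_dvd one_pos h2
  omega

lemma zm_two_ne {m : ℕ} (hm : 3 ≤ m) : (2 : ZMod m) ≠ 0 := by
  intro h
  have h2 : (m:ℕ) ∣ 2 :=
    (ZMod.natCast_eq_zero_iff 2 m).mp (by exact_mod_cast h)
  have := Nat.le_of_dvd two_pos h2
  omega

lemma succ_ne {m : ℕ} (hm : 3 ≤ m) (a : ZMod m) : a + 1 ≠ a := by
  intro h; exact zm_one_ne hm (by linear_combination h)

lemma succ2_ne {m : ℕ} (hm : 3 ≤ m) {a c : ZMod m} (h1 : c = a + 1) (h2 : a = c + 1) : False := by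
  exact zm_two_ne hm (by linear_combination -h1 - h2)

lemma z8cases (b : ZMod 8) : b=0∨b=1∨b=2∨b=3∨b=4∨b=5∨b=6∨b=7 := by revert b; decide

lemma z8flip {b d : ZMod 8} (h : b = d + 4) : d = b + 4 := by
  subst h; rw [add_assoc, show (4:ZMod 8)+4 = 0 by decide, add_zero]

lemma X8_p4 : ∀ b : ZMod 8, X8 b → ¬ X8 (b+4) := by decide
lemma X8_p4' : ∀ b : ZMod 8, ¬ X8 b → X8 (b+4) := by decide

lemma ne_of_snd {m : ℕ} {a c : ZMod m} {b d : ZMod 8} (h : b ≠ d) : (a,b) ≠ (c,d) :=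
  fun he => h (congrArg Prod.snd he)

/- ############ adjacency characterizations ############ -/

lemma f0_adj {m : ℕ} {a c : ZMod m} {b d : ZMod 8} :
    (gf0 m).Adj (a,b) (c,d) ↔ a = c ∧ (A8 (b,d) ∨ A8 (d,b)) := by
  rw [gf0, fromRel_adj]
  constructor
  · rintro ⟨-, (⟨h1, h2⟩ | ⟨h1, h2⟩)⟩
    · exact ⟨h1, Or.inl h2⟩
    · exact ⟨h1.symm, Or.inr h2⟩
  · rintro ⟨rfl, (h | h)⟩
    · refine ⟨fun he => ?_, Or.inl ⟨rfl, h⟩⟩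
      have hbd : b = d := congrArg Prod.snd he
      exact A8_irr b (hbd ▸ h)
    · refine ⟨fun he => ?_, Or.inr ⟨rfl, h⟩⟩
      have hbd : b = d := congrArg Prod.snd he
      exact A8_irr b (hbd ▸ h)

lemma f1_adj {m : ℕ} (hm : 3 ≤ m) {a c : ZMod m} {b d : ZMod 8} :
    (gf1 m).Adj (a,b) (c,d) ↔
      (a = c ∧ (B8 (b,d) ∨ B8 (d,b))) ∨ (c = a + 1 ∧ X8 b ∧ d = b + 4) ∨
        (a = c + 1 ∧ X8 d ∧ b = d + 4) := by
  rw [gf1, fromRel_adj]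
  constructor
  · rintro ⟨-, ((⟨h1, h2⟩ | h) | (⟨h1, h2⟩ | h))⟩
    · exact Or.inl ⟨h1, Or.inl h2⟩
    · exact Or.inr (Or.inl h)
    · exact Or.inl ⟨h1.symm, Or.inr h2⟩
    · exact Or.inr (Or.inr h)
  · rintro (⟨rfl, (h | h)⟩ | h | h)
    · refine ⟨fun he => ?_, Or.inl (Or.inl ⟨rfl, h⟩)⟩
      have hbd : b = d := congrArg Prod.snd he
      exact B8_irr b (hbd ▸ h)
    · refine ⟨fun he => ?_, Or.inr (Or.inl ⟨rfl, h⟩)⟩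
      have hbd : b = d := congrArg Prod.snd he
      exact B8_irr b (hbd ▸ h)
    · refine ⟨fun he => ?_, Or.inl (Or.inr h)⟩
      have hac : a = c := congrArg Prod.fst he
      exact succ_ne hm a (by rw [← h.1, hac])
    · refine ⟨fun he => ?_, Or.inr (Or.inr h)⟩
      have hac : a = c := congrArg Prod.fst he
      exact succ_ne hm c (by rw [← h.1, hac])

lemma fM_adj {m : ℕ} (hm : 3 ≤ m) {a c : ZMod m} {b d : ZMod 8} :
    (gM m).Adj (a,b) (c,d) ↔
      (c = a + 1 ∧ ¬ X8 b ∧ d = b + 4) ∨ (a = c + 1 ∧ ¬ X8 d ∧ b = d + 4) := by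
  rw [gM, fromRel_adj]
  constructor
  · rintro ⟨-, (h | h)⟩
    · exact Or.inl h
    · exact Or.inr h
  · rintro (h | h)
    · refine ⟨fun he => ?_, Or.inl h⟩
      have hac : a = c := congrArg Prod.fst he
      exact succ_ne hm a (by rw [← h.1, hac])
    · refine ⟨fun he => ?_, Or.inr h⟩
      have hac : a = c := congrArg Prod.fst he
      exact succ_ne hm c (by rw [← h.1, hac])

/- ############ neighbor sets ############ -/

lemma fM_nbhd_X {m : ℕ} (hm : 3 ≤ m) (a : ZMod m) (b : ZMod 8) (hb : X8 b) :
    (gM m).neighborSet (a,b) = {(a - 1, b + 4)} := by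
  ext ⟨c,d⟩
  simp only [mem_neighborSet, fM_adj hm, Set.mem_singleton_iff, Prod.mk.injEq]
  constructor
  · rintro (⟨h1, h2, h3⟩ | ⟨h1, h2, h3⟩)
    · exact absurd hb h2
    · exact ⟨eq_sub_of_add_eq h1.symm, z8flip h3⟩
  · rintro ⟨rfl, rfl⟩
    refine Or.inr ⟨(sub_add_cancel a 1).symm, ?_, (z8flip rfl)⟩
    revert hb; revert b; decide
  
lemma fM_nbhd_Y {m : ℕ} (hm : 3 ≤ m) (a : ZMod m) (b : ZMod 8) (hb : ¬ X8 b) :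
    (gM m).neighborSet (a,b) = {(a + 1, b + 4)} := by
  ext ⟨c,d⟩
  simp only [mem_neighborSet, fM_adj hm, Set.mem_singleton_iff, Prod.mk.injEq]
  constructor
  · rintro (⟨h1, h2, h3⟩ | ⟨h1, h2, h3⟩)
    · exact ⟨h1, h3⟩
    · exfalso
      have : d = b + 4 := z8flip h3
      subst this
      revert h2 hb; revert b; decide
  · rintro ⟨rfl, rfl⟩
    exact Or.inl ⟨rfl, hb, rfl⟩

lemma fM_one {m : ℕ} (hm : 3 ≤ m) : IsOneFactor (gM m) := by
  rintro ⟨a, b⟩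
  by_cases hb : X8 b
  · rw [fM_nbhd_X hm a b hb]; exact Set.ncard_singleton _
  · rw [fM_nbhd_Y hm a b hb]; exact Set.ncard_singleton _

lemma f0_nbhd {m : ℕ} (a : ZMod m) (b c1 c2 : ZMod 8)
    (h : ∀ d, (A8 (b,d) ∨ A8 (d,b)) ↔ (d = c1 ∨ d = c2)) :
    (gf0 m).neighborSet (a,b) = {(a,c1),(a,c2)} := by
  ext ⟨x,y⟩
  simp only [mem_neighborSet, f0_adj, Set.mem_insert_iff, Set.mem_singleton_iff, Prod.mk.injEq]
  constructor
  · rintro ⟨rfl, hA⟩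
    rcases (h y).mp hA with rfl | rfl
    · exact Or.inl ⟨rfl, rfl⟩
    · exact Or.inr ⟨rfl, rfl⟩
  · rintro (⟨rfl, rfl⟩ | ⟨rfl, rfl⟩)
    · exact ⟨rfl, (h _).mpr (Or.inl rfl)⟩
    · exact ⟨rfl, (h _).mpr (Or.inr rfl)⟩

lemma f0_deg {m : ℕ} (v : ZMod m × ZMod 8) : ((gf0 m).neighborSet v).ncard = 2 := by
  obtain ⟨a, b⟩ := v
  rcases z8cases b with rfl|rfl|rfl|rfl|rfl|rfl|rfl|rfl
  · rw [f0_nbhd a 0 5 2 (by decide)]; exact Set.ncard_pair (ne_of_snd (by decide))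
  · rw [f0_nbhd a 1 7 3 (by decide)]; exact Set.ncard_pair (ne_of_snd (by decide))
  · rw [f0_nbhd a 2 4 0 (by decide)]; exact Set.ncard_pair (ne_of_snd (by decide))
  · rw [f0_nbhd a 3 6 1 (by decide)]; exact Set.ncard_pair (ne_of_snd (by decide))
  · rw [f0_nbhd a 4 2 6 (by decide)]; exact Set.ncard_pair (ne_of_snd (by decide))
  · rw [f0_nbhd a 5 0 7 (by decide)]; exact Set.ncard_pair (ne_of_snd (by decide))
  · rw [f0_nbhd a 6 3 4 (by decide)]; exact Set.ncard_pair (ne_of_snd (by decide))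
  · rw [f0_nbhd a 7 5 1 (by decide)]; exact Set.ncard_pair (ne_of_snd (by decide))

lemma f1_nbhd_X {m : ℕ} (hm : 3 ≤ m) (a : ZMod m) (b c : ZMod 8) (hX : X8 b)
    (hB : ∀ d, (B8 (b,d) ∨ B8 (d,b)) ↔ d = c) :
    (gf1 m).neighborSet (a,b) = {(a,c), (a+1, b+4)} := by
  have hX4 : ¬ X8 (b+4) := X8_p4 b hX
  ext ⟨x,y⟩
  simp only [mem_neighborSet, f1_adj hm, Set.mem_insert_iff, Set.mem_singleton_iff,
    Prod.mk.injEq]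
  constructor
  · rintro (⟨rfl, hB'⟩ | ⟨rfl, -, rfl⟩ | ⟨h1, h2, h3⟩)
    · exact Or.inl ⟨rfl, (hB y).mp hB'⟩
    · exact Or.inr ⟨rfl, rfl⟩
    · exfalso
      have : y = b + 4 := z8flip h3
      subst this
      exact hX4 h2
  · rintro (⟨rfl, rfl⟩ | ⟨rfl, rfl⟩)
    · exact Or.inl ⟨rfl, (hB _).mpr rfl⟩
    · exact Or.inr (Or.inl ⟨rfl, hX, rfl⟩)

lemma f1_nbhd_Y {m : ℕ} (hm : 3 ≤ m) (a : ZMod m) (b c : ZMod 8) (hX : ¬ X8 b)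
    (hB : ∀ d, (B8 (b,d) ∨ B8 (d,b)) ↔ d = c) :
    (gf1 m).neighborSet (a,b) = {(a,c), (a-1, b+4)} := by
  have hX4 : X8 (b+4) := X8_p4' b hX
  ext ⟨x,y⟩
  simp only [mem_neighborSet, f1_adj hm, Set.mem_insert_iff, Set.mem_singleton_iff,
    Prod.mk.injEq]
  constructor
  · rintro (⟨rfl, hB'⟩ | ⟨rfl, hXb, rfl⟩ | ⟨h1, h2, h3⟩)
    · exact Or.inl ⟨rfl, (hB y).mp hB'⟩
    · exact absurd hXb hX
    · exact Or.inr ⟨eq_sub_of_add_eq h1.symm, z8flip h3⟩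
  · rintro (⟨rfl, rfl⟩ | ⟨rfl, rfl⟩)
    · exact Or.inl ⟨rfl, (hB _).mpr rfl⟩
    · exact Or.inr (Or.inr ⟨(sub_add_cancel a 1).symm, hX4, z8flip rfl⟩)

lemma f1_deg {m : ℕ} (hm : 3 ≤ m) (v : ZMod m × ZMod 8) :
    ((gf1 m).neighborSet v).ncard = 2 := by
  obtain ⟨a, b⟩ := v
  rcases z8cases b with rfl|rfl|rfl|rfl|rfl|rfl|rfl|rfl
  · rw [f1_nbhd_X hm a 0 6 (by decide) (by decide)]
    exact Set.ncard_pair (ne_of_snd (by decide))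
  · rw [f1_nbhd_Y hm a 1 4 (by decide) (by decide)]
    exact Set.ncard_pair (ne_of_snd (by decide))
  · rw [f1_nbhd_Y hm a 2 7 (by decide) (by decide)]
    exact Set.ncard_pair (ne_of_snd (by decide))
  · rw [f1_nbhd_X hm a 3 5 (by decide) (by decide)]
    exact Set.ncard_pair (ne_of_snd (by decide))
  · rw [f1_nbhd_Y hm a 4 1 (by decide) (by decide)]
    exact Set.ncard_pair (ne_of_snd (by decide))
  · rw [f1_nbhd_X hm a 5 3 (by decide) (by decide)]
    exact Set.ncard_pair (ne_of_snd (by decide))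
  · rw [f1_nbhd_X hm a 6 0 (by decide) (by decide)]
    exact Set.ncard_pair (ne_of_snd (by decide))
  · rw [f1_nbhd_Y hm a 7 2 (by decide) (by decide)]
    exact Set.ncard_pair (ne_of_snd (by decide))

/- ############ connected components ############ -/

lemma closed_mem {V : Type*} (H : SimpleGraph V) (S : Set V)
    (hcl : ∀ u ∈ S, ∀ w, H.Adj u w → w ∈ S) :
    ∀ {x y : V}, H.Reachable x y → x ∈ S → y ∈ S := by
  intro x y h hx
  obtain ⟨w⟩ := h
  induction w with
  | nil => exact hx
  | cons h' p ih => exact ih (hcl _ hx _ h')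

lemma supp_eq {V : Type*} (H : SimpleGraph V) (S : Set V) (v : V) (hv : v ∈ S)
    (hcl : ∀ u ∈ S, ∀ w, H.Adj u w → w ∈ S)
    (hre : ∀ u ∈ S, H.Reachable v u) :
    (H.connectedComponentMk v).supp = S := by
  ext u
  simp only [ConnectedComponent.mem_supp_iff, ConnectedComponent.eq]
  exact ⟨fun h => closed_mem H S hcl h.symm hv, fun hu => (hre u hu).symm⟩

lemma ncard_range8 {V : Type*} (h : Fin 8 → V) (hinj : Function.Injective h) :
    (Set.range h).ncard = 8 := by
  rw [← Set.image_univ, Set.ncard_image_of_injective _ hinj, Set.ncard_univ]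
  simp

lemma f0_supp {m : ℕ} (a : ZMod m) (b : ZMod 8) :
    ((gf0 m).connectedComponentMk (a,b)).supp = {p : ZMod m × ZMod 8 | p.1 = a} := by
  have adjA : ∀ (b d : ZMod 8), (A8 (b,d) ∨ A8 (d,b)) → (gf0 m).Adj (a,b) (a,d) :=
    fun b d h => f0_adj.mpr ⟨rfl, h⟩
  have c1 := ((adjA 0 5 (by decide)).reachable :)
  have c2 := c1.trans (adjA 5 7 (by decide)).reachable
  have c3 := c2.trans (adjA 7 1 (by decide)).reachable
  have c4 := c3.trans (adjA 1 3 (by decide)).reachable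
  have c5 := c4.trans (adjA 3 6 (by decide)).reachable
  have c6 := c5.trans (adjA 6 4 (by decide)).reachable
  have c7 := c6.trans (adjA 4 2 (by decide)).reachable
  have hub : ∀ c : ZMod 8, (gf0 m).Reachable (a,0) (a,c) := by
    intro c
    rcases z8cases c with rfl|rfl|rfl|rfl|rfl|rfl|rfl|rfl
    exacts [Reachable.refl _, c3, c7, c4, c6, c1, c5, c2]
  refine supp_eq _ _ _ rfl ?_ ?_
  · rintro ⟨x1,x2⟩ hx ⟨w1,w2⟩ hadj
    rw [f0_adj] at hadj
    have hx' : x1 = a := hx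
    show w1 = a
    rw [← hadj.1]; exact hx'
  · rintro ⟨u1,u2⟩ hu
    have hu' : u1 = a := hu
    subst hu'
    exact (hub b).symm.trans (hub u2)

lemma f0_comp {m : ℕ} (v : ZMod m × ZMod 8) :
    (((gf0 m).connectedComponentMk v).supp).ncard = 8 := by
  obtain ⟨a, b⟩ := v
  rw [f0_supp]
  have : {p : ZMod m × ZMod 8 | p.1 = a} = Set.range (fun c : ZMod 8 => (a,c)) := by
    ext ⟨p1,p2⟩
    constructor
    · intro h
      have h' : p1 = a := h
      exact ⟨p2, by rw [h']⟩
    · rintro ⟨c, hc⟩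
      exact ((congrArg Prod.fst hc).symm : p1 = a)
  rw [this, ← Set.image_univ,
    Set.ncard_image_of_injective _ (fun c c' h => (congrArg Prod.snd h : c = c')),
    Set.ncard_univ]
  simp

def S1 (m : ℕ) (j : ZMod m) : Set (ZMod m × ZMod 8) :=
  {p | (p.1 = j ∧ X8 p.2) ∨ (p.1 = j + 1 ∧ ¬ X8 p.2)}

lemma B8_X : ∀ b d : ZMod 8, (B8 (b,d) ∨ B8 (d,b)) → (X8 b ↔ X8 d) := by decide

lemma f1_closed {m : ℕ} (hm : 3 ≤ m) (j : ZMod m) :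
    ∀ u ∈ S1 m j, ∀ w, (gf1 m).Adj u w → w ∈ S1 m j := by
  rintro ⟨x1,x2⟩ hx ⟨w1,w2⟩ hadj
  rw [f1_adj hm] at hadj
  rcases hadj with ⟨h1, hBB⟩ | ⟨h1, hXx, h2⟩ | ⟨h1, hXw, h2⟩
  · have hiff : X8 x2 ↔ X8 w2 := B8_X _ _ hBB
    rcases hx with ⟨hj, hX⟩ | ⟨hj, hY⟩
    · have hj' : x1 = j := hj
      exact Or.inl ⟨show w1 = j by rw [← h1]; exact hj', hiff.mp hX⟩
    · have hj' : x1 = j + 1 := hj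
      exact Or.inr ⟨show w1 = j + 1 by rw [← h1]; exact hj', fun hw => hY (hiff.mpr hw)⟩
  · rcases hx with ⟨hj, hX⟩ | ⟨hj, hY⟩
    · have hj' : x1 = j := hj
      exact Or.inr ⟨show w1 = j + 1 by rw [h1, hj'],
        show ¬ X8 w2 by rw [h2]; exact X8_p4 _ hXx⟩
    · exact absurd hXx hY
  · rcases hx with ⟨hj, hX⟩ | ⟨hj, hY⟩
    · exfalso
      have hne := X8_p4 _ hXw
      rw [← h2] at hne
      exact hne hX
    · have hj' : x1 = j + 1 := hj
      refine Or.inl ⟨?_, hXw⟩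
      have hcc : w1 + 1 = j + 1 := by rw [← h1, hj']
      exact add_right_cancel hcc

lemma f1_hub {m : ℕ} (hm : 3 ≤ m) (j : ZMod m) :
    ∀ u ∈ S1 m j, (gf1 m).Reachable (j, (0:ZMod 8)) u := by
  have e1 : (gf1 m).Adj (j,0) (j+1,4) :=
    (f1_adj hm).mpr (Or.inr (Or.inl ⟨rfl, by decide, by decide⟩))
  have e2 : (gf1 m).Adj (j+1,4) (j+1,1) := (f1_adj hm).mpr (Or.inl ⟨rfl, by decide⟩)
  have e3 : (gf1 m).Adj (j+1,1) (j,5) :=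
    (f1_adj hm).mpr (Or.inr (Or.inr ⟨rfl, by decide, by decide⟩))
  have e4 : (gf1 m).Adj (j,5) (j,3) := (f1_adj hm).mpr (Or.inl ⟨rfl, by decide⟩)
  have e5 : (gf1 m).Adj (j,3) (j+1,7) :=
    (f1_adj hm).mpr (Or.inr (Or.inl ⟨rfl, by decide, by decide⟩))
  have e6 : (gf1 m).Adj (j+1,7) (j+1,2) := (f1_adj hm).mpr (Or.inl ⟨rfl, by decide⟩)
  have e7 : (gf1 m).Adj (j+1,2) (j,6) :=
    (f1_adj hm).mpr (Or.inr (Or.inr ⟨rfl, by decide, by decide⟩))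
  have r1 := e1.reachable
  have r2 := r1.trans e2.reachable
  have r3 := r2.trans e3.reachable
  have r4 := r3.trans e4.reachable
  have r5 := r4.trans e5.reachable
  have r6 := r5.trans e6.reachable
  have r7 := r6.trans e7.reachable
  rintro ⟨u1,u2⟩ (⟨rfl, hX⟩ | ⟨rfl, hY⟩)
  · simp only [X8] at hX
    rcases hX with rfl|rfl|rfl|rfl
    exacts [Reachable.refl _, r4, r3, r7]
  · have h4 := (by decide : ∀ b : ZMod 8, ¬ X8 b → (b=1∨b=2∨b=4∨b=7)) u2 hY
    rcases h4 with rfl|rfl|rfl|rfl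
    exacts [r2, r6, r1, r5]

lemma f1_supp {m : ℕ} (hm : 3 ≤ m) (j : ZMod m) (v : ZMod m × ZMod 8) (hv : v ∈ S1 m j) :
    ((gf1 m).connectedComponentMk v).supp = S1 m j :=
  supp_eq _ _ _ hv (f1_closed hm j)
    (fun u hu => ((f1_hub hm j v hv).symm.trans (f1_hub hm j u hu)))

lemma vec8_inj : Function.Injective (![0,3,5,6,1,2,4,7] : Fin 8 → ZMod 8) := by decide

lemma S1_ncard {m : ℕ} (j : ZMod m) : (S1 m j).ncard = 8 := by
  set g : Fin 8 → ZMod 8 := ![0,3,5,6,1,2,4,7] with hg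
  set w : Fin 8 → ZMod m := ![j,j,j,j,j+1,j+1,j+1,j+1] with hw
  set h : Fin 8 → ZMod m × ZMod 8 := fun i => (w i, g i) with hh
  have hrange : S1 m j = Set.range h := by
    ext ⟨p1,p2⟩
    constructor
    · rintro (⟨hp, hX⟩ | ⟨hp, hY⟩)
      · have hp' : p1 = j := hp
        subst hp'
        simp only [X8] at hX
        rcases hX with rfl|rfl|rfl|rfl
        exacts [⟨0,rfl⟩, ⟨1,rfl⟩, ⟨2,rfl⟩, ⟨3,rfl⟩]
      · have hp' : p1 = j + 1 := hp
        subst hp'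
        have h4 := (by decide : ∀ b : ZMod 8, ¬ X8 b → (b=1∨b=2∨b=4∨b=7)) p2 hY
        rcases h4 with rfl|rfl|rfl|rfl
        exacts [⟨4,rfl⟩, ⟨5,rfl⟩, ⟨6,rfl⟩, ⟨7,rfl⟩]
    · rintro ⟨i, hi⟩
      rw [← hi]
      fin_cases i
      · exact Or.inl ⟨rfl, (by decide : X8 (0:ZMod 8))⟩
      · exact Or.inl ⟨rfl, (by decide : X8 (3:ZMod 8))⟩
      · exact Or.inl ⟨rfl, (by decide : X8 (5:ZMod 8))⟩
      · exact Or.inl ⟨rfl, (by decide : X8 (6:ZMod 8))⟩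
      · exact Or.inr ⟨rfl, (by decide : ¬ X8 (1:ZMod 8))⟩
      · exact Or.inr ⟨rfl, (by decide : ¬ X8 (2:ZMod 8))⟩
      · exact Or.inr ⟨rfl, (by decide : ¬ X8 (4:ZMod 8))⟩
      · exact Or.inr ⟨rfl, (by decide : ¬ X8 (7:ZMod 8))⟩
  rw [hrange]
  apply ncard_range8
  intro i i' hii
  have h2 : g i = g i' := congrArg Prod.snd hii
  exact vec8_inj h2

lemma f1_comp {m : ℕ} (hm : 3 ≤ m) (v : ZMod m × ZMod 8) :
    (((gf1 m).connectedComponentMk v).supp).ncard = 8 := by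
  obtain ⟨a, b⟩ := v
  by_cases hb : X8 b
  · rw [f1_supp hm a (a,b) (Or.inl ⟨rfl, hb⟩)]
    exact S1_ncard a
  · rw [f1_supp hm (a-1) (a,b) (Or.inr ⟨(sub_add_cancel a 1).symm, hb⟩)]
    exact S1_ncard (a-1)

/- ############ the host graph ############ -/

lemma A8_sub : ∀ p : ZMod 8 × ZMod 8, A8 p → p ∈ I456 := by decide
lemma B8_sub : ∀ p : ZMod 8 × ZMod 8, B8 p → p ∈ I456 := by decide
lemma I456_split : ∀ b d : ZMod 8, ((b,d) ∈ I456 ∨ (d,b) ∈ I456) →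
    ((A8 (b,d) ∨ A8 (d,b)) ∨ (B8 (b,d) ∨ B8 (d,b))) := by decide
lemma AB_disj : ∀ b d : ZMod 8, (A8 (b,d) ∨ A8 (d,b)) → (B8 (b,d) ∨ B8 (d,b)) → False := by
  decide
lemma I456_irr : ∀ b : ZMod 8, ¬ ((b,b) ∈ I456) := by decide

lemma G_adj {m : ℕ} (hm : 3 ≤ m) {a c : ZMod m} {b d : ZMod 8} :
    (SimpleGraph.fromRel (fun x y : ZMod m × ZMod 8 =>
        x - y = ((1 : ZMod m), (4 : ZMod 8)) ∨ (x.1 = y.1 ∧ (x.2, y.2) ∈ I456))).Adj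
      (a,b) (c,d) ↔
      (c = a + 1 ∧ d = b + 4) ∨ (a = c + 1 ∧ b = d + 4) ∨
        (a = c ∧ ((b,d) ∈ I456 ∨ (d,b) ∈ I456)) := by
  rw [fromRel_adj]
  have hsub : ∀ (x z : ZMod m) (y v : ZMod 8),
      ((x,y) - (z,v) = ((1:ZMod m),(4:ZMod 8))) ↔ (x = z + 1 ∧ y = v + 4) := by
    intro x z y v
    rw [Prod.mk_sub_mk, Prod.mk.injEq]
    constructor
    · rintro ⟨h1, h2⟩
      exact ⟨by linear_combination h1, by linear_combination h2⟩
    · rintro ⟨rfl, rfl⟩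
      exact ⟨by ring, by ring⟩
  constructor
  · rintro ⟨hne, (h | h) | (h | h)⟩
    · exact Or.inr (Or.inl ((hsub a c b d).mp h))
    · exact Or.inr (Or.inr ⟨h.1, Or.inl h.2⟩)
    · exact Or.inl ((hsub c a d b).mp h)
    · exact Or.inr (Or.inr ⟨h.1.symm, Or.inr h.2⟩)
  · rintro (⟨h1, h2⟩ | ⟨h1, h2⟩ | ⟨rfl, hI⟩)
    · refine ⟨fun he => ?_, Or.inr (Or.inl ((hsub c a d b).mpr ⟨h1, h2⟩))⟩
      have hac : a = c := congrArg Prod.fst he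
      exact succ_ne hm a (by rw [← h1, hac])
    · refine ⟨fun he => ?_, Or.inl (Or.inl ((hsub a c b d).mpr ⟨h1, h2⟩))⟩
      have hac : a = c := congrArg Prod.fst he
      exact succ_ne hm c (by rw [← h1, hac])
    · have hbd : b ≠ d := by
        intro hbd
        subst hbd
        rcases hI with hI | hI <;> exact I456_irr b hI
      rcases hI with hI | hI
      · exact ⟨ne_of_snd hbd, Or.inl (Or.inr ⟨rfl, hI⟩)⟩
      · exact ⟨ne_of_snd hbd, Or.inr (Or.inr ⟨rfl, hI⟩)⟩


theorem stmt_9 (m : ℕ) (hm : 3 ≤ m) :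
    CycleDecompPM
      (SimpleGraph.fromRel (fun x y : ZMod m × ZMod 8 =>
        x - y = ((1 : ZMod m), (4 : ZMod 8)) ∨ (x.1 = y.1 ∧ (x.2, y.2) ∈ I456)))
      (fun _ : Fin 2 => 8) := by
  classical
  refine ⟨![gf0 m, gf1 m], gM m, ?_, ?_, fM_one hm, ?_⟩
  · intro i
    fin_cases i
    · refine ⟨?_, f0_deg, f0_comp⟩
      rintro ⟨a,b⟩ ⟨c,d⟩ hh
      have h : (gf0 m).Adj (a,b) (c,d) := hh
      rw [f0_adj] at h
      rw [G_adj hm]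
      rcases h.2 with hA | hA
      · exact Or.inr (Or.inr ⟨h.1, Or.inl (A8_sub _ hA)⟩)
      · exact Or.inr (Or.inr ⟨h.1, Or.inr (A8_sub _ hA)⟩)
    · refine ⟨?_, f1_deg hm, f1_comp hm⟩
      rintro ⟨a,b⟩ ⟨c,d⟩ hh
      have h : (gf1 m).Adj (a,b) (c,d) := hh
      rw [f1_adj hm] at h
      rw [G_adj hm]
      rcases h with ⟨h1, hB | hB⟩ | ⟨h1, hX, h2⟩ | ⟨h1, hX, h2⟩
      · exact Or.inr (Or.inr ⟨h1, Or.inl (B8_sub _ hB)⟩)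
      · exact Or.inr (Or.inr ⟨h1, Or.inr (B8_sub _ hB)⟩)
      · exact Or.inl ⟨h1, h2⟩
      · exact Or.inr (Or.inl ⟨h1, h2⟩)
  · rintro ⟨a,b⟩ ⟨c,d⟩ h
    rw [fM_adj hm] at h
    rw [G_adj hm]
    rcases h with ⟨h1, -, h2⟩ | ⟨h1, -, h2⟩
    · exact Or.inl ⟨h1, h2⟩
    · exact Or.inr (Or.inl ⟨h1, h2⟩)
  · intro e
    induction e using Sym2.ind with
    | _ x y =>
      intro he
      obtain ⟨a, b⟩ := x
      obtain ⟨c, d⟩ := y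
      rw [mem_edgeSet, G_adj hm] at he
      have hf0 : s((a,b),(c,d)) ∈ (gf0 m).edgeSet ↔ (gf0 m).Adj (a,b) (c,d) := mem_edgeSet _
      rcases he with ⟨h1, h2⟩ | ⟨h1, h2⟩ | ⟨rfl, hI⟩
      · -- cross, c = a + 1, d = b + 4
        by_cases hb : X8 b
        · left
          constructor
          · refine ⟨1, ?_, ?_⟩
            · show s(((a:ZMod m),(b:ZMod 8)),(c,d)) ∈ (gf1 m).edgeSet
              rw [mem_edgeSet, f1_adj hm]
              exact Or.inr (Or.inl ⟨h1, hb, h2⟩)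
            · intro i hi
              fin_cases i
              · exfalso
                have hi' : (gf0 m).Adj (a,b) (c,d) := hi
                rw [f0_adj] at hi'
                exact succ_ne hm a (by rw [← h1, hi'.1])
              · rfl
          · intro hM
            have hM' : (gM m).Adj (a,b) (c,d) := hM
            rw [fM_adj hm] at hM'
            rcases hM' with ⟨-, hnb, -⟩ | ⟨hh, -, -⟩
            · exact hnb hb
            · exact succ2_ne hm h1 hh
        · right
          constructor
          · intro i
            fin_cases i
            · intro hi
              have hi' : (gf0 m).Adj (a,b) (c,d) := hi
              rw [f0_adj] at hi'
              exact succ_ne hm a (by rw [← h1, hi'.1])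
            · intro hi
              have hi' : (gf1 m).Adj (a,b) (c,d) := hi
              rw [f1_adj hm] at hi'
              rcases hi' with ⟨hac, -⟩ | ⟨-, hX, -⟩ | ⟨hh, -, -⟩
              · exact succ_ne hm a (by rw [← h1, hac])
              · exact hb hX
              · exact succ2_ne hm h1 hh
          · show (gM m).Adj (a,b) (c,d)
            rw [fM_adj hm]
            exact Or.inl ⟨h1, hb, h2⟩
      · -- cross, a = c + 1, b = d + 4
        by_cases hd : X8 d
        · left
          constructor
          · refine ⟨1, ?_, ?_⟩
            · show s(((a:ZMod m),(b:ZMod 8)),(c,d)) ∈ (gf1 m).edgeSet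
              rw [mem_edgeSet, f1_adj hm]
              exact Or.inr (Or.inr ⟨h1, hd, h2⟩)
            · intro i hi
              fin_cases i
              · exfalso
                have hi' : (gf0 m).Adj (a,b) (c,d) := hi
                rw [f0_adj] at hi'
                exact succ_ne hm c (by rw [← h1, ← hi'.1])
              · rfl
          · intro hM
            have hM' : (gM m).Adj (a,b) (c,d) := hM
            rw [fM_adj hm] at hM'
            rcases hM' with ⟨hh, -, -⟩ | ⟨-, hnd, -⟩
            · exact succ2_ne hm hh h1
            · exact hnd hd
        · right
          constructor
          · intro i
            fin_cases i
            · intro hi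
              have hi' : (gf0 m).Adj (a,b) (c,d) := hi
              rw [f0_adj] at hi'
              exact succ_ne hm c (by rw [← h1, ← hi'.1])
            · intro hi
              have hi' : (gf1 m).Adj (a,b) (c,d) := hi
              rw [f1_adj hm] at hi'
              rcases hi' with ⟨hac, -⟩ | ⟨hh, -, -⟩ | ⟨-, hX, -⟩
              · exact succ_ne hm c (by rw [← h1, ← hac])
              · exact succ2_ne hm hh h1
              · exact hd hX
          · show (gM m).Adj (a,b) (c,d)
            rw [fM_adj hm]
            exact Or.inr ⟨h1, hd, h2⟩
      · -- within a column
        have hnM : s(((a:ZMod m),(b:ZMod 8)),(a,d)) ∉ (gM m).edgeSet := by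
          intro hM
          have hM' : (gM m).Adj (a,b) (a,d) := hM
          rw [fM_adj hm] at hM'
          rcases hM' with ⟨hh, -, -⟩ | ⟨hh, -, -⟩ <;> exact succ_ne hm a hh.symm
        rcases I456_split b d hI with hA | hB
        · left
          refine ⟨⟨0, ?_, ?_⟩, hnM⟩
          · show s(((a:ZMod m),(b:ZMod 8)),(a,d)) ∈ (gf0 m).edgeSet
            rw [mem_edgeSet, f0_adj]
            exact ⟨rfl, hA⟩
          · intro i hi
            fin_cases i
            · rfl
            · exfalso
              have hi' : (gf1 m).Adj (a,b) (a,d) := hi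
              rw [f1_adj hm] at hi'
              rcases hi' with ⟨-, hBB⟩ | ⟨hh, -, -⟩ | ⟨hh, -, -⟩
              · exact AB_disj b d hA hBB
              · exact succ_ne hm a hh.symm
              · exact succ_ne hm a hh.symm
        · left
          refine ⟨⟨1, ?_, ?_⟩, hnM⟩
          · show s(((a:ZMod m),(b:ZMod 8)),(a,d)) ∈ (gf1 m).edgeSet
            rw [mem_edgeSet, f1_adj hm]
            exact Or.inl ⟨rfl, hB⟩
          · intro i hi
            fin_cases i
            · exfalso
              have hi' : (gf0 m).Adj (a,b) (a,d) := hi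
              rw [f0_adj] at hi'
              exact AB_disj b d hi'.2 hB
            · rfl
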